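/- Let R be a commutative ring, n ≥ 3 a natural number, and let 𝔞, 𝔟 be two ideals of R. Then E(n,𝔞𝔟) ≤ ⁅E(n,𝔞), E(n,𝔟)⁆, and consequently E(n,R,𝔞𝔟) ≤ ⁅E(n,R,𝔞), E(n,R,𝔟)⁆. (Type A_{n−1} instance of the paper's lower-level lemma E(Φ,R,𝔞𝔟) ≤ [E(Φ,R,𝔞), E(Φ,R,𝔟)]; for type A no hypotheses on residue fields are needed.) -/

import Mathlib

open Matrix

/-- `SL n R` : the special linear group of degree `n` over `R`,
the simply connected Chevalley group of type `A_{n-1}`. -/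
abbrev SL (n : ℕ) (R : Type*) [CommRing R] := Matrix.SpecialLinearGroup (Fin n) R

/-- The elementary transvection `e_{ij}(a) = 1 + a·E_{ij}` as an element of `SL n R`. -/
def elemTransv {n : ℕ} {R : Type*} [CommRing R] (i j : Fin n) (h : i ≠ j) (a : R) :
    SL n R :=
  ⟨Matrix.transvection i j a, Matrix.det_transvection_of_ne i j h a⟩

/-- The set of elementary transvections with parameters in `S`. -/
def transvSet (n : ℕ) {R : Type*} [CommRing R] (S : Set R) : Set (SL n R) :=
  { x | ∃ i j : Fin n, ∃ h : i ≠ j, ∃ a ∈ S, x = elemTransv i j h a }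

/-- `E(n,S)` : the subgroup generated by elementary transvections with parameters in `S`. -/
def Esub (n : ℕ) {R : Type*} [CommRing R] (S : Set R) : Subgroup (SL n R) :=
  Subgroup.closure (transvSet n S)

/-- `E(n,T,S)` : the normal closure of `E(n,S)` in `E(n,T)`, i.e. the subgroup
generated by the conjugates of elementary generators of level `S` by elements
of `E(n,T)`. -/
def relESet (n : ℕ) {R : Type*} [CommRing R] (T S : Set R) : Subgroup (SL n R) :=
  Subgroup.closure
    { x | ∃ g ∈ Esub n T, ∃ y ∈ transvSet n S, x = g * y * g⁻¹ }

/-- `E(n,R,I)` : the relative elementary subgroup, the normal closure of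
`E(n,I)` in the absolute elementary subgroup `E(n,R)`. -/
def relE (n : ℕ) {R : Type*} [CommRing R] (I : Ideal R) : Subgroup (SL n R) :=
  relESet n (Set.univ : Set R) (I : Set R)

/-- The reduction homomorphism `SL(n,R) → SL(n,R/I)`. -/
def redMap (n : ℕ) {R : Type*} [CommRing R] (I : Ideal R) : SL n R →* SL n (R ⧸ I) :=
  Matrix.SpecialLinearGroup.map (Ideal.Quotient.mk I)

/-- `SL(n,R,I)` : the principal congruence subgroup of level `I`. -/
def SLcong (n : ℕ) {R : Type*} [CommRing R] (I : Ideal R) : Subgroup (SL n R) :=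
  (redMap n I).ker

/-- `C(n,R,I)` : the full congruence subgroup of level `I`. -/
def Ccong (n : ℕ) {R : Type*} [CommRing R] (I : Ideal R) : Subgroup (SL n R) :=
  Subgroup.comap (redMap n I) (Subgroup.center (SL n (R ⧸ I)))

/-!
For a third index `k ∉ {i, j}`, which exists as soon as `n ≥ 3`, the Chevalley commutator
formula `⁅e_{ik}(x), e_{kj}(y)⁆ = e_{ij}(xy)` puts every `e_{ij}(xy)` with `x ∈ 𝔞`, `y ∈ 𝔟`
into `⁅E(n,𝔞), E(n,𝔟)⁆`; since `e_{ij}` is additive in its parameter, all generators of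
`E(n,𝔞𝔟)` follow. For the relative groups, `⁅E(n,R,𝔞), E(n,R,𝔟)⁆` is normalized by `E(n,R)`
and contains `E(n,𝔞𝔟)`, hence also its normal closure `E(n,R,𝔞𝔟)`.
-/

open scoped commutatorElement

section

variable {n : ℕ} {R : Type*} [CommRing R]

lemma elemTransv_add (i j : Fin n) (h : i ≠ j) (x y : R) :
    elemTransv i j h (x + y) = elemTransv i j h x * elemTransv i j h y :=
  Subtype.ext (Matrix.transvection_mul_transvection_same i j h x y).symm

lemma commutatorElement_elemTransv (i k j : Fin n) (hik : i ≠ k) (hkj : k ≠ j) (hij : i ≠ j)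
    (x y : R) :
    ⁅elemTransv i k hik x, elemTransv k j hkj y⁆ = elemTransv i j hij (x * y) := by
  have mul_comm_up_to : elemTransv i k hik x * elemTransv k j hkj y =
      elemTransv i j hij (x * y) * (elemTransv k j hkj y * elemTransv i k hik x) := by
    apply Subtype.ext
    change Matrix.transvection i k x * Matrix.transvection k j y =
      Matrix.transvection i j (x * y) * (Matrix.transvection k j y * Matrix.transvection i k x)
    simp only [Matrix.transvection, Matrix.add_mul, Matrix.mul_add, Matrix.one_mul,
      Matrix.mul_one, Matrix.single_mul_single_same, Matrix.single_mul_single_of_ne,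
      hij.symm, hkj.symm, Ne, not_false_iff, add_zero]
    abel
  rw [commutatorElement_def, mul_assoc (_ * _), ← _root_.mul_inv_rev, mul_comm_up_to,
    mul_inv_cancel_right]

lemma elemTransv_mem_Esub {S : Set R} {i j : Fin n} {h : i ≠ j} {x : R} (hx : x ∈ S) :
    elemTransv i j h x ∈ Esub n S :=
  Subgroup.subset_closure ⟨i, j, h, x, hx, rfl⟩

lemma Esub_mul_le_commutator (hn : 3 ≤ n) (a b : Ideal R) :
    Esub n ((a * b : Ideal R) : Set R) ≤ ⁅Esub n (a : Set R), Esub n (b : Set R)⁆ := by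
  rw [Esub, Subgroup.closure_le]
  rintro _ ⟨i, j, hij, c, hc, rfl⟩
  refine Submodule.mul_induction_on hc (fun x hx y hy => ?_) (fun x y hx hy => ?_)
  · obtain ⟨k, hki, hkj⟩ := ENat.exists_ne_ne_of_three_le (by simpa using hn) i j
    rw [← commutatorElement_elemTransv i k j hki.symm hkj hij x y]
    exact Subgroup.commutator_mem_commutator (elemTransv_mem_Esub hx) (elemTransv_mem_Esub hy)
  · rw [elemTransv_add]
    exact mul_mem hx hy

lemma Esub_le_relESet (T S : Set R) : Esub n S ≤ relESet n T S := by
  rw [Esub, Subgroup.closure_le]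
  intro y hy
  exact Subgroup.subset_closure ⟨1, one_mem _, y, hy, by group⟩

lemma relESet_le_of_conj_mem {T S : Set R} {H : Subgroup (SL n R)} (hS : Esub n S ≤ H)
    (hH : ∀ g ∈ Esub n T, ∀ x ∈ H, g * x * g⁻¹ ∈ H) : relESet n T S ≤ H := by
  rw [relESet, Subgroup.closure_le]
  rintro _ ⟨g, hg, y, hy, rfl⟩
  exact hH g hg y (hS (Subgroup.subset_closure hy))

lemma map_conj_relESet_le {T : Set R} {g : SL n R} (hg : g ∈ Esub n T) (S : Set R) :
    (relESet n T S).map (MulAut.conj g).toMonoidHom ≤ relESet n T S := by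
  rw [relESet, MonoidHom.map_closure, Subgroup.closure_le]
  rintro _ ⟨_, ⟨h, hh, y, hy, rfl⟩, rfl⟩
  refine Subgroup.subset_closure ⟨g * h, mul_mem hg hh, y, hy, ?_⟩
  simp [MulAut.conj_apply, mul_assoc]

lemma conj_mem_commutator_relESet {T : Set R} {g x : SL n R} (hg : g ∈ Esub n T)
    (S₁ S₂ : Set R) (hx : x ∈ ⁅relESet n T S₁, relESet n T S₂⁆) :
    g * x * g⁻¹ ∈ ⁅relESet n T S₁, relESet n T S₂⁆ := by
  have hmap : g * x * g⁻¹ ∈ ⁅relESet n T S₁, relESet n T S₂⁆.map (MulAut.conj g).toMonoidHom :=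
    ⟨x, hx, rfl⟩
  rw [Subgroup.map_commutator] at hmap
  exact Subgroup.commutator_mono (map_conj_relESet_le hg S₁) (map_conj_relESet_le hg S₂) hmap

end

/-- For a commutative ring `R`, `n ≥ 3` and ideals `𝔞, 𝔟 ⊴ R`,
`E(n,𝔞𝔟) ≤ ⁅E(n,𝔞), E(n,𝔟)⁆` and consequently
`E(n,R,𝔞𝔟) ≤ ⁅E(n,R,𝔞), E(n,R,𝔟)⁆`. -/
theorem Esub_mul_le_commutator_and_relE_mul_le_commutator
    {R : Type*} [CommRing R] (n : ℕ) (hn : 3 ≤ n) (a b : Ideal R) :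
    Esub n ((a * b : Ideal R) : Set R) ≤ ⁅Esub n (a : Set R), Esub n (b : Set R)⁆ ∧
      relE n (a * b) ≤ ⁅relE n a, relE n b⁆ := by
  have hE := Esub_mul_le_commutator hn a b
  refine ⟨hE, relESet_le_of_conj_mem ?_ fun g hg x hx => conj_mem_commutator_relESet hg _ _ hx⟩
  exact hE.trans (Subgroup.commutator_mono (Esub_le_relESet _ _) (Esub_le_relESet _ _))
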